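/- Let b ≥ 3 be odd, let c_j = mod*(a·2^j, b) be the modified modular doubling cycle of primitive length P = k(b) (indices taken cyclically: c_{P+l} = c_l), with input a odd, coprime to b, 1 ≤ a ≤ (b−1)/2. Define q_j = b − 2·c_{P−1+j} for j = 0, …, P. Then q_0 = a and q_j = |b − 2·q_{j−1}| for all 1 ≤ j ≤ P; i.e., the q_j satisfy Schick's unsigned recurrence. -/
import Mathlib


/-- The modified residue `mod*(a, b)`: `a mod b` if `a mod b ≤ b/2`, else `b − (a mod b)`. -/
def modStar (b : ℕ) (a : ℤ) : ℤ :=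
  if a % (b : ℤ) ≤ (b : ℤ) / 2 then a % (b : ℤ) else (b : ℤ) - a % (b : ℤ)

lemma twoMul_emod (b : ℕ) (x : ℤ) :
    (2 * x) % b = (2 * (x % b)) % b := by
  have h := Int.emod_add_mul_ediv x b
  have h2 : 2 * x = 2 * (x % b) + (b:ℤ) * (2 * (x / b)) := by linarith
  rw [h2, Int.add_mul_emod_self_left]

lemma modStar_double (b : ℕ) (hb : 3 ≤ b) (hodd : Odd b) (x : ℤ) :
    (b:ℤ) - 2 * modStar b (2 * x) = |4 * modStar b x - b| := by
  have hbpos : (0:ℤ) < b := by exact_mod_cast Nat.lt_of_lt_of_le (by norm_num) hb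
  have hbI : (3:ℤ) ≤ b := by exact_mod_cast hb
  have hb2 : (b:ℤ) % 2 = 1 := by
    obtain ⟨n, hn⟩ := hodd
    have : (b:ℤ) = 2*(n:ℤ) + 1 := by exact_mod_cast hn
    omega
  have hm0 : 0 ≤ x % b := Int.emod_nonneg x (by omega)
  have hm1 : x % b < b := Int.emod_lt_of_pos x hbpos
  have hx : (2 * x) % b = (2 * (x % b)) % b := twoMul_emod b x
  unfold modStar
  rw [hx]
  rcases lt_or_ge (2*(x % b)) b with hs | hs
  · have h : (2*(x % b)) % b = 2*(x % b) := Int.emod_eq_of_lt (by omega) hs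
    rw [h]
    split_ifs with h1 h2 h2 <;>
      first
        | (rw [abs_of_nonneg (by omega)]; omega)
        | (rw [abs_of_nonpos (by omega)]; omega)
  · have h5 : (2*(x%b) - b) % b = (2*(x%b)) % b := by
      rw [Int.sub_emod, Int.emod_self, sub_zero, Int.emod_emod_of_dvd _ dvd_rfl]
    have h : (2*(x % b)) % b = 2*(x % b) - b := by
      rw [← h5]; exact Int.emod_eq_of_lt (by omega) (by omega)
    rw [h]
    split_ifs with h1 h2 h2 <;>
      first
        | (rw [abs_of_nonneg (by omega)]; omega)
        | (rw [abs_of_nonpos (by omega)]; omega)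

lemma modStar_base (b : ℕ) (hb : 3 ≤ b) (hodd : Odd b) (a y : ℤ) (haodd : Odd a)
    (ha1 : 1 ≤ a) (ha2 : a ≤ ((b:ℤ)-1)/2)
    (hdvd : (b:ℤ) ∣ 2*y - a ∨ (b:ℤ) ∣ 2*y + a) :
    (b:ℤ) - 2 * modStar b y = a := by
  have hbpos : (0:ℤ) < b := by exact_mod_cast Nat.lt_of_lt_of_le (by norm_num) hb
  have hbI : (3:ℤ) ≤ b := by exact_mod_cast hb
  have hb2 : (b:ℤ) % 2 = 1 := by
    obtain ⟨n, hn⟩ := hodd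
    have : (b:ℤ) = 2*(n:ℤ) + 1 := by exact_mod_cast hn
    omega
  have ha2' : a % 2 = 1 := Int.odd_iff.mp haodd
  have hm0 : 0 ≤ y % b := Int.emod_nonneg y (by omega)
  have hm1 : y % b < b := Int.emod_lt_of_pos y hbpos
  have hyd : 2*y - 2*(y % b) = (b:ℤ) * (2 * (y / b)) := by
    have := Int.emod_add_mul_ediv y b; linarith
  rcases hdvd with hd | hd
  · have hd2 : (b:ℤ) ∣ 2*(y % b) - a := by
      have : 2*(y % b) - a = (2*y - a) - (b:ℤ) * (2 * (y / b)) := by linarith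
      rw [this]; exact dvd_sub hd ⟨_, rfl⟩
    obtain ⟨t, ht⟩ := hd2
    have ht0 : 0 ≤ t := by
      by_contra hc
      push_neg at hc
      have : (b:ℤ) * t ≤ (b:ℤ) * (-1) := by
        apply mul_le_mul_of_nonneg_left (by omega) (by omega)
      omega
    have ht1 : t ≤ 1 := by
      by_contra hc
      push_neg at hc
      have : (b:ℤ) * 2 ≤ (b:ℤ) * t := by
        apply mul_le_mul_of_nonneg_left (by omega) (by omega)
      omega
    interval_cases t <;> unfold modStar <;> split_ifs <;> omega
  · have hd2 : (b:ℤ) ∣ 2*(y % b) + a := by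
      have : 2*(y % b) + a = (2*y + a) - (b:ℤ) * (2 * (y / b)) := by linarith
      rw [this]; exact dvd_sub hd ⟨_, rfl⟩
    obtain ⟨t, ht⟩ := hd2
    have ht0 : 0 ≤ t := by
      by_contra hc
      push_neg at hc
      have : (b:ℤ) * t ≤ (b:ℤ) * (-1) := by
        apply mul_le_mul_of_nonneg_left (by omega) (by omega)
      omega
    have ht1 : t ≤ 2 := by
      by_contra hc
      push_neg at hc
      have : (b:ℤ) * 3 ≤ (b:ℤ) * t := by
        apply mul_le_mul_of_nonneg_left (by omega) (by omega)
      omega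
    interval_cases t <;> unfold modStar <;> split_ifs <;> omega


/-- For odd `b ≥ 3`, odd `a` coprime to `b` with `1 ≤ a ≤ (b−1)/2`, and `P = k(b)` the
least `k ≥ 1` with `2 ^ k ≡ ±1 (mod b)`: setting `c j = mod*(a·2^j, b)` and
`q j = b − 2·c (P−1+j)` for `j = 0, …, P`, one has `q 0 = a` and
`q j = |b − 2·q (j−1)|` for `1 ≤ j ≤ P`; i.e. `q` satisfies Schick's unsigned recurrence. -/
theorem schick_from_mds (b : ℕ) (hb : 3 ≤ b) (hodd : Odd b)
    (a : ℤ) (haodd : Odd a) (ha : Int.gcd a b = 1) (ha1 : 1 ≤ a)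
    (ha2 : a ≤ ((b : ℤ) - 1) / 2)
    (P : ℕ)
    (hP : IsLeast {k : ℕ | 1 ≤ k ∧ ((2 : ZMod b) ^ k = 1 ∨ (2 : ZMod b) ^ k = -1)} P)
    (q : ℕ → ℤ)
    (hq : ∀ j : ℕ, j ≤ P → q j = (b : ℤ) - 2 * modStar b (a * 2 ^ (P - 1 + j))) :
    q 0 = a ∧ ∀ j : ℕ, 1 ≤ j → j ≤ P → q j = |(b : ℤ) - 2 * q (j - 1)| := by
  have hP1 : 1 ≤ P := hP.1.1
  constructor
  · have hdvd : (b:ℤ) ∣ 2^P - 1 ∨ (b:ℤ) ∣ 2^P + 1 := by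
      rcases hP.1.2 with h | h
      · left
        have h0 : (((2:ℤ)^P - 1 : ℤ) : ZMod b) = 0 := by push_cast; rw [h]; ring
        exact (ZMod.intCast_zmod_eq_zero_iff_dvd _ b).mp h0
      · right
        have h0 : (((2:ℤ)^P + 1 : ℤ) : ZMod b) = 0 := by push_cast; rw [h]; ring
        exact (ZMod.intCast_zmod_eq_zero_iff_dvd _ b).mp h0
    rw [hq 0 (by omega)]
    apply modStar_base b hb hodd a _ haodd ha1 ha2
    have hpow : 2 * (a * 2 ^ (P - 1 + 0)) = a * 2 ^ P := by
      conv_rhs => rw [show P = (P-1)+1 from by omega]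
      rw [Nat.add_zero, pow_succ]
      ring
    rw [hpow]
    rcases hdvd with h | h
    · left
      have : a * 2^P - a = a * (2^P - 1) := by ring
      rw [this]; exact Dvd.dvd.mul_left h a
    · right
      have : a * 2^P + a = a * (2^P + 1) := by ring
      rw [this]; exact Dvd.dvd.mul_left h a
  · intro j hj1 hjP
    rw [hq j hjP, hq (j-1) (by omega)]
    have he : a * 2 ^ (P - 1 + j) = 2 * (a * 2 ^ (P - 1 + (j-1))) := by
      rw [show P - 1 + j = (P - 1 + (j-1)) + 1 from by omega, pow_succ]
      ring
    rw [he, modStar_double b hb hodd]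
    congr 1
    ring
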